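/- arXiv:1510.01780 — 8 statements merged into one kernel-verified Lean document; each statement's English description precedes it below -/
import Mathlib

section
/- Let β ∈ (0,∞) and x ≥ 0, and let U(1), U(2) be independent Unif([0,1]) random variables. Define S = 𝟙(U(1) < 1/(1+x)^β) and φ(x,U(1),U(2)) = S·U(2)^{1/β} + (1−S)·U(1)^{1/β}(1+x). Then φ(x,U(1),U(2)) has the same distribution as (1+x)U^{1/β} for U ∼ Unif([0,1]); that is, φ(·,U(1),U(2)) is an update function for the Markov chain X_{t+1} = U_{t+1}^{1/β}(1 + X_t). -/
open MeasureTheory ProbabilityTheory Set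

private lemma mu0_rpow_le (β : ℝ) (hβ : 0 < β) (s : ℝ) (hs : 0 ≤ s) :
    (volume.restrict (Set.Icc (0:ℝ) 1)) {u : ℝ | u ^ (1/β) ≤ s}
      = ENNReal.ofReal (min 1 (s ^ β)) := by
  rw [Measure.restrict_apply' measurableSet_Icc]
  have hset : {u : ℝ | u ^ (1/β) ≤ s} ∩ Icc 0 1 = Icc 0 (min 1 (s ^ β)) := by
    ext u
    simp only [mem_inter_iff, mem_setOf_eq, mem_Icc, le_min_iff]
    constructor
    · rintro ⟨h1, h2, h3⟩
      refine ⟨h2, h3, ?_⟩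
      rw [one_div, Real.rpow_inv_le_iff_of_pos h2 hs hβ] at h1
      exact h1
    · rintro ⟨h2, h3, h4⟩
      refine ⟨?_, h2, h3⟩
      rw [one_div, Real.rpow_inv_le_iff_of_pos h2 hs hβ]
      exact h4
  rw [hset, Real.volume_Icc, sub_zero]

private lemma mu0_rpow_le_neg (β : ℝ) (s : ℝ) (hs : s < 0) :
    (volume.restrict (Set.Icc (0:ℝ) 1)) {u : ℝ | u ^ (1/β) ≤ s} = 0 := by
  rw [Measure.restrict_apply' measurableSet_Icc]
  have hset : {u : ℝ | u ^ (1/β) ≤ s} ∩ Icc 0 1 = ∅ := by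
    ext u
    simp only [mem_inter_iff, mem_setOf_eq, mem_Icc, mem_empty_iff_false, iff_false, not_and]
    rintro h1 h2
    exact absurd (lt_of_le_of_lt h1 hs) (not_lt.2 (Real.rpow_nonneg h2 _))
  rw [hset, measure_empty]

private lemma mu0_Iio (p : ℝ) (_hp0 : 0 ≤ p) (hp1 : p ≤ 1) :
    (volume.restrict (Set.Icc (0:ℝ) 1)) (Iio p) = ENNReal.ofReal p := by
  rw [Measure.restrict_apply' measurableSet_Icc]
  have hset : Iio p ∩ Icc (0:ℝ) 1 = Ico 0 p := by
    ext u
    simp only [mem_inter_iff, mem_Iio, mem_Icc, mem_Ico]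
    constructor
    · rintro ⟨h1, h2, h3⟩; exact ⟨h2, h1⟩
    · rintro ⟨h1, h2⟩; exact ⟨h2, h1, le_trans h2.le hp1⟩
  rw [hset, Real.volume_Ico, sub_zero]

private lemma mu0_band (β : ℝ) (hβ : 0 < β) (p s : ℝ) (hp0 : 0 ≤ p) (hs : 0 ≤ s) :
    (volume.restrict (Set.Icc (0:ℝ) 1)) {u : ℝ | ¬ u < p ∧ u ^ (1/β) ≤ s}
      = ENNReal.ofReal (min 1 (s ^ β) - p) := by
  rw [Measure.restrict_apply' measurableSet_Icc]
  have hset : {u : ℝ | ¬ u < p ∧ u ^ (1/β) ≤ s} ∩ Icc 0 1 = Icc p (min 1 (s ^ β)) := by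
    ext u
    simp only [mem_inter_iff, mem_setOf_eq, mem_Icc, not_lt, le_min_iff]
    constructor
    · rintro ⟨⟨h1, h2⟩, h3, h4⟩
      rw [one_div, Real.rpow_inv_le_iff_of_pos h3 hs hβ] at h2
      exact ⟨h1, h4, h2⟩
    · rintro ⟨h1, h2, h3⟩
      have hu0 : 0 ≤ u := hp0.trans h1
      refine ⟨⟨h1, ?_⟩, hu0, h2⟩
      rw [one_div, Real.rpow_inv_le_iff_of_pos hu0 hs hβ]
      exact h3
  rw [hset, Real.volume_Icc]

private lemma mu0_band_neg (β p s : ℝ) (_hp0 : 0 ≤ p) (hs : s < 0) :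
    (volume.restrict (Set.Icc (0:ℝ) 1)) {u : ℝ | ¬ u < p ∧ u ^ (1/β) ≤ s} = 0 := by
  rw [Measure.restrict_apply' measurableSet_Icc]
  have hset : {u : ℝ | ¬ u < p ∧ u ^ (1/β) ≤ s} ∩ Icc 0 1 = ∅ := by
    ext u
    simp only [mem_inter_iff, mem_setOf_eq, mem_Icc, mem_empty_iff_false, iff_false, not_and]
    rintro ⟨h1, h2⟩ h3 h4
    exact absurd (lt_of_le_of_lt h2 hs) (not_lt.2 (Real.rpow_nonneg h3 _))
  rw [hset, measure_empty]

/-- For `β > 0`, `x ≥ 0` and independent `U(1), U(2) ~ Unif([0,1])`, the update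
`φ(x,U(1),U(2)) = 𝟙(U(1) < 1/(1+x)^β)·U(2)^(1/β)
  + (1 − 𝟙(U(1) < 1/(1+x)^β))·U(1)^(1/β)·(1+x)`
has the same distribution as `(1+x)·U^(1/β)` for `U ~ Unif([0,1])`. -/
theorem update_function_valid_old
    {Ω : Type*} [MeasureSpace Ω] [IsProbabilityMeasure (ℙ : Measure Ω)]
    (β : ℝ) (hβ : 0 < β) (x : ℝ) (hx : 0 ≤ x)
    (U1 U2 : Ω → ℝ) (hU1 : Measurable U1) (hU2 : Measurable U2)
    (law1 : Measure.map U1 ℙ = volume.restrict (Set.Icc (0:ℝ) 1))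
    (law2 : Measure.map U2 ℙ = volume.restrict (Set.Icc (0:ℝ) 1))
    (hind : IndepFun U1 U2 ℙ) :
    Measure.map (fun ω =>
        (if U1 ω < 1 / (1 + x) ^ β then (1:ℝ) else 0) * (U2 ω) ^ (1/β)
        + (1 - if U1 ω < 1 / (1 + x) ^ β then (1:ℝ) else 0)
            * (U1 ω) ^ (1/β) * (1 + x)) ℙ
      = Measure.map (fun u : ℝ => (1 + x) * u ^ (1/β))
          (volume.restrict (Set.Icc (0:ℝ) 1)) := by
  have h1x : (0:ℝ) < 1 + x := by linarith
  set p : ℝ := 1 / (1 + x) ^ β with hp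
  have hpow_pos : (0:ℝ) < (1 + x) ^ β := Real.rpow_pos_of_pos h1x β
  have hp0 : 0 < p := by positivity
  have hp1 : p ≤ 1 := by
    rw [hp, div_le_one hpow_pos]
    exact Real.one_le_rpow (by linarith) hβ.le
  -- measurability
  have hmemA : MeasurableSet {ω | U1 ω < p} := measurableSet_lt hU1 measurable_const
  have hi : Measurable (fun ω => if U1 ω < p then (1:ℝ) else 0) :=
    Measurable.ite hmemA measurable_const measurable_const
  have hφ : Measurable (fun ω =>
      (if U1 ω < p then (1:ℝ) else 0) * (U2 ω) ^ (1/β)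
      + (1 - if U1 ω < p then (1:ℝ) else 0) * (U1 ω) ^ (1/β) * (1 + x)) := by
    fun_prop
  have hg : Measurable (fun u : ℝ => (1 + x) * u ^ (1/β)) := by fun_prop
  have hprob : IsProbabilityMeasure (volume.restrict (Set.Icc (0:ℝ) 1)) := by
    constructor; simp
  have : IsProbabilityMeasure (Measure.map (fun ω =>
      (if U1 ω < p then (1:ℝ) else 0) * (U2 ω) ^ (1/β)
      + (1 - if U1 ω < p then (1:ℝ) else 0) * (U1 ω) ^ (1/β) * (1 + x)) ℙ) :=
    Measure.isProbabilityMeasure_map hφ.aemeasurable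
  refine Measure.ext_of_Iic _ _ (fun t => ?_)
  rw [Measure.map_apply hφ measurableSet_Iic, Measure.map_apply hg measurableSet_Iic]
  -- Measurable sets in ℝ
  have hT2 : MeasurableSet {u : ℝ | u ^ (1/β) ≤ t / 1} :=
    measurableSet_le (by fun_prop) measurable_const
  have hB1 : MeasurableSet {u : ℝ | ¬ u < p ∧ u ^ (1/β) ≤ t / (1 + x)} := by
    rw [Set.setOf_and]
    have hcompl : MeasurableSet {u : ℝ | ¬ u < p} := by
      simp only [not_lt]
      exact measurableSet_le measurable_const measurable_id
    exact hcompl.inter (measurableSet_le (by fun_prop) measurable_const)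
  -- Decompose the preimage
  have hdecomp : (fun ω =>
      (if U1 ω < p then (1:ℝ) else 0) * (U2 ω) ^ (1/β)
      + (1 - if U1 ω < p then (1:ℝ) else 0) * (U1 ω) ^ (1/β) * (1 + x)) ⁻¹' Iic t
      = (U1 ⁻¹' Iio p ∩ U2 ⁻¹' {u : ℝ | u ^ (1/β) ≤ t / 1})
        ∪ (U1 ⁻¹' {u : ℝ | ¬ u < p ∧ u ^ (1/β) ≤ t / (1 + x)}) := by
    ext ω
    by_cases h : U1 ω < p
    · simp [h, div_one]
    · have h' : p ≤ U1 ω := not_lt.1 h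
      simp only [mem_preimage, mem_Iic, mem_union, mem_inter_iff, mem_Iio, mem_setOf_eq,
        if_neg h, h, if_false, not_lt, h', true_and, false_and, false_or, sub_zero, zero_mul,
        one_mul, zero_add]
      rw [le_div_iff₀ h1x]
  rw [hdecomp, measure_union _ (hU1 hB1)]
  swap
  · refine Set.disjoint_left.2 (fun ω hω1 hω2 => ?_)
    exact hω2.1 hω1.1
  rw [hind.measure_inter_preimage_eq_mul _ _ measurableSet_Iio hT2,
    ← Measure.map_apply hU1 measurableSet_Iio, ← Measure.map_apply hU2 hT2,
    ← Measure.map_apply hU1 hB1, law1, law2]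
  -- RHS preimage
  have hRHS : (fun u : ℝ => (1 + x) * u ^ (1/β)) ⁻¹' Iic t
      = {u : ℝ | u ^ (1/β) ≤ t / (1 + x)} := by
    ext u
    simp only [mem_preimage, mem_Iic, mem_setOf_eq]
    rw [le_div_iff₀ h1x, mul_comm]
  rw [hRHS, mu0_Iio p hp0.le hp1]
  by_cases ht : 0 ≤ t
  · have ht1 : 0 ≤ t / 1 := by simpa using ht
    have ht2 : 0 ≤ t / (1 + x) := div_nonneg ht h1x.le
    rw [mu0_rpow_le β hβ _ ht1, mu0_rpow_le β hβ _ ht2, mu0_band β hβ p _ hp0.le ht2]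
    -- now pure algebra
    have hq : (t / (1 + x)) ^ β = t ^ β * p := by
      rw [Real.div_rpow ht h1x.le, hp, div_eq_mul_inv, div_eq_mul_inv, one_mul]
    rw [div_one, hq]
    set a : ℝ := t ^ β with ha
    have ha0 : 0 ≤ a := Real.rpow_nonneg ht β
    rw [← ENNReal.ofReal_mul hp0.le]
    rcases le_total a 1 with h1 | h1
    · have hmin1 : min 1 a = a := min_eq_right h1
      have hap1 : a * p ≤ 1 := le_trans (mul_le_one₀ h1 hp0.le hp1) le_rfl
      have hmin2 : min 1 (a * p) = a * p := min_eq_right hap1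
      rw [hmin1, hmin2, ENNReal.ofReal_eq_zero.2 (by nlinarith : a * p - p ≤ 0), add_zero,
        mul_comm]
    · have hmin1 : min 1 a = 1 := min_eq_left h1
      have hpap : p ≤ min 1 (a * p) := by
        refine le_min hp1 ?_
        nlinarith
      rw [hmin1, mul_one, ← ENNReal.ofReal_add hp0.le (by linarith [hpap])]
      ring_nf
  · push_neg at ht
    have ht1 : t / 1 < 0 := by simpa using ht
    have ht2 : t / (1 + x) < 0 := div_neg_of_neg_of_pos ht h1x
    rw [mu0_rpow_le_neg β _ ht1, mu0_rpow_le_neg β _ ht2, mu0_band_neg β p _ hp0.le ht2]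
    simp
end

section
/- Let β ∈ (0,∞) and 0 ≤ m ≤ x, and let U(1), U(2) be independent Unif([0,1]) random variables. Define r = 𝟙(U(1) ≤ ((1+m)/(1+x))^β) and φ(x,U(1),U(2),m) = r·(1+m)U(2)^{1/β} + (1−r)·(1+x)U(1)^{1/β}. Then φ(x,U(1),U(2),m) has the same distribution as (1+x)U^{1/β} for U ∼ Unif([0,1]); that is, the new update function is a valid update function for the Markov chain X_{t+1} = U_{t+1}^{1/β}(1 + X_t). -/
/-!
With `p = ((1+m)/(1+x))^β ∈ (0,1]` we have `(1+x)·p^(1/β) = 1+m`, so the update equals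
`(1+x)·V^(1/β)` almost surely, where `V = p·U(2)` if `U(1) ≤ p` and `V = U(1)` otherwise.
Conditionally on `U(1) ≤ p`, `U(1)` is uniform on `[0,p]`, and replacing it by the independent
`p·U(2)` does not change this conditional law, so `V` is again uniform on `[0,1]`.
-/

open MeasureTheory ProbabilityTheory Set

noncomputable def resampleBelow (p u₁ u₂ : ℝ) : ℝ := if u₁ ≤ p then p * u₂ else u₁

lemma Measurable.resampleBelow {Ω : Type*} [MeasurableSpace Ω] (p : ℝ) {f g : Ω → ℝ}
    (hf : Measurable f) (hg : Measurable g) :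
    Measurable (fun ω => resampleBelow p (f ω) (g ω)) :=
  Measurable.ite (hf measurableSet_Iic) (hg.const_mul p) hf

lemma volume_restrict_Icc_zero_one_Iic (t : ℝ) :
    volume.restrict (Icc (0:ℝ) 1) (Iic t) = ENNReal.ofReal (min t 1) := by
  have : Iic t ∩ Icc (0:ℝ) 1 = Icc 0 (min t 1) := by
    ext y
    simp only [mem_inter_iff, mem_Iic, mem_Icc, le_min_iff]
    tauto
  rw [Measure.restrict_apply measurableSet_Iic, this, Real.volume_Icc, sub_zero]

lemma volume_restrict_Icc_zero_one_Ioc {p : ℝ} (hp : 0 ≤ p) (t : ℝ) :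
    volume.restrict (Icc (0:ℝ) 1) (Ioc p t) = ENNReal.ofReal (min t 1 - p) := by
  have : Ioc p t ∩ Icc (0:ℝ) 1 = Ioc p (min t 1) := by
    ext y
    simp only [mem_inter_iff, mem_Ioc, mem_Icc, le_min_iff]
    constructor
    · rintro ⟨⟨hpy, hyt⟩, -, hy1⟩
      exact ⟨hpy, hyt, hy1⟩
    · rintro ⟨hpy, hyt, hy1⟩
      exact ⟨⟨hpy, hyt⟩, hp.trans hpy.le, hy1⟩
  rw [Measure.restrict_apply measurableSet_Ioc, this, Real.volume_Ioc]

lemma resampleBelow_le_iff {p : ℝ} (hp : 0 < p) (u₁ u₂ t : ℝ) :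
    resampleBelow p u₁ u₂ ≤ t ↔ (u₁ ≤ p ∧ u₂ ≤ t / p) ∨ u₁ ∈ Ioc p t := by
  unfold resampleBelow
  by_cases h : u₁ ≤ p
  · simp [h, le_div_iff₀ hp, mul_comm, not_lt_of_ge h]
  · simp [h, not_le.mp h]

lemma uniform_cdf_split {p : ℝ} (hp0 : 0 < p) (hp1 : p ≤ 1) (t : ℝ) :
    ENNReal.ofReal p * ENNReal.ofReal (min (t / p) 1) + ENNReal.ofReal (min t 1 - p)
      = ENNReal.ofReal (min t 1) := by
  rcases le_or_gt t p with htp | hpt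
  · rw [min_eq_left ((div_le_one hp0).mpr htp), min_eq_left (htp.trans hp1),
      ENNReal.ofReal_of_nonpos (sub_nonpos.mpr htp), add_zero, ← ENNReal.ofReal_mul hp0.le,
      mul_div_cancel₀ _ hp0.ne']
  · rw [min_eq_right ((one_le_div hp0).mpr hpt.le), ENNReal.ofReal_one, mul_one,
      ← ENNReal.ofReal_add hp0.le (by linarith [le_min hpt.le hp1]), add_sub_cancel]

theorem map_resampleBelow_eq_uniform {Ω : Type*} [MeasurableSpace Ω] {μ : Measure Ω}
    {p : ℝ} (hp0 : 0 < p) (hp1 : p ≤ 1)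
    {U₁ U₂ : Ω → ℝ} (hU₁ : Measurable U₁) (hU₂ : Measurable U₂)
    (law₁ : μ.map U₁ = volume.restrict (Icc 0 1))
    (law₂ : μ.map U₂ = volume.restrict (Icc 0 1))
    (hind : IndepFun U₁ U₂ μ) :
    μ.map (fun ω => resampleBelow p (U₁ ω) (U₂ ω)) = volume.restrict (Icc 0 1) := by
  refine (Measure.ext_of_Iic _ _ fun t => ?_).symm
  have hpre : (fun ω => resampleBelow p (U₁ ω) (U₂ ω)) ⁻¹' Iic t
      = (U₁ ⁻¹' Iic p ∩ U₂ ⁻¹' Iic (t / p)) ∪ U₁ ⁻¹' Ioc p t := by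
    ext ω
    exact resampleBelow_le_iff hp0 (U₁ ω) (U₂ ω) t
  have hdisj : Disjoint (U₁ ⁻¹' Iic p ∩ U₂ ⁻¹' Iic (t / p)) (U₁ ⁻¹' Ioc p t) :=
    disjoint_left.mpr fun _ h₁ h₂ => not_lt_of_ge h₁.1 h₂.1
  rw [Measure.map_apply (hU₁.resampleBelow p hU₂) measurableSet_Iic, hpre,
    measure_union hdisj (hU₁ measurableSet_Ioc),
    hind.measure_inter_preimage_eq_mul _ _ measurableSet_Iic measurableSet_Iic,
    ← Measure.map_apply hU₁ measurableSet_Iic, ← Measure.map_apply hU₂ measurableSet_Iic,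
    ← Measure.map_apply hU₁ measurableSet_Ioc, law₁, law₂,
    volume_restrict_Icc_zero_one_Iic t,
    volume_restrict_Icc_zero_one_Iic p, volume_restrict_Icc_zero_one_Iic (t / p),
    volume_restrict_Icc_zero_one_Ioc hp0.le,
    min_eq_left hp1, uniform_cdf_split hp0 hp1]

theorem update_function_valid_new_general
    {Ω : Type*} [MeasureSpace Ω]
    (β : ℝ) (hβ : 0 < β) (m x : ℝ) (hm : 0 ≤ m) (hmx : m ≤ x)
    (U1 U2 : Ω → ℝ) (hU1 : Measurable U1) (hU2 : Measurable U2)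
    (law1 : Measure.map U1 ℙ = volume.restrict (Set.Icc (0:ℝ) 1))
    (law2 : Measure.map U2 ℙ = volume.restrict (Set.Icc (0:ℝ) 1))
    (hind : IndepFun U1 U2 ℙ) :
    Measure.map (fun ω =>
        (if U1 ω ≤ ((1 + m) / (1 + x)) ^ β then (1:ℝ) else 0)
            * (1 + m) * (U2 ω) ^ (1/β)
        + (1 - if U1 ω ≤ ((1 + m) / (1 + x)) ^ β then (1:ℝ) else 0)
            * (1 + x) * (U1 ω) ^ (1/β)) ℙ
      = Measure.map (fun u : ℝ => (1 + x) * u ^ (1/β))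
          (volume.restrict (Set.Icc (0:ℝ) 1)) := by
  set c := (1 + m) / (1 + x)
  have hc0 : 0 < c := div_pos (by linarith) (by linarith)
  have hc1 : c ≤ 1 := (div_le_one (by linarith)).mpr (by linarith)
  have hxc : (1 + x) * c = 1 + m := mul_div_cancel₀ _ (by linarith)
  clear_value c
  have hp0 : 0 < c ^ β := Real.rpow_pos_of_pos hc0 β
  have hp1 : c ^ β ≤ 1 := Real.rpow_le_one hc0.le hc1 hβ.le
  have hU2_nonneg : ∀ᵐ ω ∂(ℙ : Measure Ω), 0 ≤ U2 ω :=
    (ae_of_ae_map hU2.aemeasurable (law2 ▸ ae_restrict_mem measurableSet_Icc)).mono fun _ h => h.1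
  have hg : Measurable (fun u : ℝ => (1 + x) * u ^ (1/β)) :=
    ((Real.continuous_rpow_const (by positivity)).measurable).const_mul _
  calc _ = Measure.map ((fun u : ℝ => (1 + x) * u ^ (1/β)) ∘
          (fun ω => resampleBelow (c ^ β) (U1 ω) (U2 ω))) ℙ := by
        refine Measure.map_congr (hU2_nonneg.mono fun ω hω => ?_)
        by_cases h : U1 ω ≤ c ^ β
        · simp only [Function.comp_apply, resampleBelow, if_pos h]
          rw [Real.mul_rpow hp0.le hω, ← Real.rpow_mul hc0.le, mul_one_div_cancel hβ.ne',
            Real.rpow_one]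
          linear_combination -(U2 ω ^ (1 / β)) * hxc
        · simp only [Function.comp_apply, resampleBelow, if_neg h]
          ring
    _ = _ := by
      rw [← Measure.map_map hg (hU1.resampleBelow _ hU2),
        map_resampleBelow_eq_uniform hp0 hp1 hU1 hU2 law1 law2 hind]

/-- For `β > 0`, `0 ≤ m ≤ x` and independent `U(1), U(2) ~ Unif([0,1])`, the new
update `φ(x,U(1),U(2),m) = r·(1+m)·U(2)^(1/β) + (1−r)·(1+x)·U(1)^(1/β)` with
`r = 𝟙(U(1) ≤ ((1+m)/(1+x))^β)` has the same distribution as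
`(1+x)·U^(1/β)` for `U ~ Unif([0,1])`. -/
theorem update_function_valid_new
    {Ω : Type*} [MeasureSpace Ω] [IsProbabilityMeasure (ℙ : Measure Ω)]
    (β : ℝ) (hβ : 0 < β) (m x : ℝ) (hm : 0 ≤ m) (hmx : m ≤ x)
    (U1 U2 : Ω → ℝ) (hU1 : Measurable U1) (hU2 : Measurable U2)
    (law1 : Measure.map U1 ℙ = volume.restrict (Set.Icc (0:ℝ) 1))
    (law2 : Measure.map U2 ℙ = volume.restrict (Set.Icc (0:ℝ) 1))
    (hind : IndepFun U1 U2 ℙ) :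
    Measure.map (fun ω =>
        (if U1 ω ≤ ((1 + m) / (1 + x)) ^ β then (1:ℝ) else 0)
            * (1 + m) * (U2 ω) ^ (1/β)
        + (1 - if U1 ω ≤ ((1 + m) / (1 + x)) ^ β then (1:ℝ) else 0)
            * (1 + x) * (U1 ω) ^ (1/β)) ℙ
      = Measure.map (fun u : ℝ => (1 + x) * u ^ (1/β))
          (volume.restrict (Set.Icc (0:ℝ) 1)) :=
  update_function_valid_new_general β hβ m x hm hmx U1 U2 hU1 hU2 law1 law2 hind
end

section
/- Let β ∈ (0,∞). For all real numbers 0 ≤ x ≤ y and all u(1), u(2) ∈ [0,1], the update function φ(x,u(1),u(2)) = 𝟙(u(1) < 1/(1+x)^β)u(2)^{1/β} + 𝟙(u(1) ≥ 1/(1+x)^β)u(1)^{1/β}(1+x) is monotonic: φ(x,u(1),u(2)) ≤ φ(y,u(1),u(2)). -/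
/-- Monotonicity of the update function: for `β > 0`, `0 ≤ x ≤ y` and
`u1, u2 ∈ [0,1]`,
`𝟙(u1 < 1/(1+x)^β)·u2^(1/β) + 𝟙(u1 ≥ 1/(1+x)^β)·u1^(1/β)·(1+x)
  ≤ 𝟙(u1 < 1/(1+y)^β)·u2^(1/β) + 𝟙(u1 ≥ 1/(1+y)^β)·u1^(1/β)·(1+y)`. -/
theorem update_function_monotone
    (β : ℝ) (hβ : 0 < β) (x y u1 u2 : ℝ)
    (hx : 0 ≤ x) (hxy : x ≤ y)
    (hu1 : u1 ∈ Set.Icc (0:ℝ) 1) (hu2 : u2 ∈ Set.Icc (0:ℝ) 1) :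
    (if u1 < 1 / (1 + x) ^ β then (1:ℝ) else 0) * u2 ^ (1/β)
      + (if 1 / (1 + x) ^ β ≤ u1 then (1:ℝ) else 0) * u1 ^ (1/β) * (1 + x)
    ≤ (if u1 < 1 / (1 + y) ^ β then (1:ℝ) else 0) * u2 ^ (1/β)
      + (if 1 / (1 + y) ^ β ≤ u1 then (1:ℝ) else 0) * u1 ^ (1/β) * (1 + y) := by
  obtain ⟨hu10, hu11⟩ := hu1
  obtain ⟨hu20, hu21⟩ := hu2
  have hx1 : (0:ℝ) < 1 + x := by linarith
  have hy1 : (0:ℝ) < 1 + y := by linarith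
  have hxβ : (0:ℝ) < (1 + x) ^ β := Real.rpow_pos_of_pos hx1 β
  have hyβ : (0:ℝ) < (1 + y) ^ β := Real.rpow_pos_of_pos hy1 β
  have hmono : (1 + x) ^ β ≤ (1 + y) ^ β :=
    Real.rpow_le_rpow hx1.le (by linarith) hβ.le
  have hty : 1 / (1 + y) ^ β ≤ 1 / (1 + x) ^ β :=
    one_div_le_one_div_of_le hxβ hmono
  by_cases h1 : u1 < 1 / (1 + y) ^ β
  · have h2 : u1 < 1 / (1 + x) ^ β := lt_of_lt_of_le h1 hty
    simp only [if_pos h1, if_pos h2, if_neg (not_le.mpr h1), if_neg (not_le.mpr h2),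
      one_mul, zero_mul, mul_zero, add_zero, le_refl]
  · push_neg at h1
    have hRHS : (1:ℝ) ≤ u1 ^ (1/β) * (1 + y) := by
      have hu1pos : (0:ℝ) < u1 := lt_of_lt_of_le (by positivity) h1
      have : (1 / (1 + y) ^ β) ^ (1/β) ≤ u1 ^ (1/β) :=
        Real.rpow_le_rpow (by positivity) h1 (by positivity)
      have heq : (1 / (1 + y) ^ β) ^ (1/β) = 1 / (1 + y) := by
        rw [one_div ((1+y)^β), ← Real.rpow_neg hy1.le, ← Real.rpow_mul hy1.le,
          neg_mul, mul_one_div, div_self hβ.ne', Real.rpow_neg_one, one_div]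
      rw [heq] at this
      calc (1:ℝ) = (1/(1+y)) * (1+y) := by field_simp
        _ ≤ u1 ^ (1/β) * (1 + y) := by
            apply mul_le_mul_of_nonneg_right this hy1.le
    by_cases h2 : u1 < 1 / (1 + x) ^ β
    · -- LHS = u2^(1/β) ≤ 1 ≤ RHS
      simp only [if_pos h2, if_pos h1, if_neg (not_lt.mpr h1), if_neg (not_le.mpr h2),
        one_mul, zero_mul, mul_zero, add_zero, zero_add]
      calc u2 ^ (1/β) ≤ 1 := Real.rpow_le_one hu20 hu21 (by positivity)
        _ ≤ u1 ^ (1/β) * (1 + y) := hRHS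
    · push_neg at h2
      simp only [if_neg (not_lt.mpr h1), if_neg (not_lt.mpr h2), if_pos h1, if_pos h2,
        one_mul, zero_mul, zero_add]
      have : (0:ℝ) ≤ u1 ^ (1/β) := by positivity
      nlinarith
end

section
/- Let β ≥ 1 and x₀ = (1 + (2/3)^{1/β})/(1 − (2/3)^{1/β}). For all real numbers x, y with 0 ≤ x ≤ y and y ≥ x₀ − 1, and all u(1), u(2) ∈ [0,1], it holds that φ(x,u(1),u(2)) ≤ φ_D(y,u(1),u(2)), where φ(x,u(1),u(2)) = 𝟙(u(1) < 1/(1+x)^β)u(2)^{1/β} + 𝟙(u(1) ≥ 1/(1+x)^β)u(1)^{1/β}(1+x) and φ_D(y,u(1),u(2)) = y + 𝟙(u(1) > 2/3) − 𝟙(u(1) ≤ 2/3 and y ≥ x₀). -/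
/-- Domination: for `β ≥ 1`, `x₀ = (1+(2/3)^(1/β))/(1-(2/3)^(1/β))`,
`0 ≤ x ≤ y` with `y ≥ x₀ - 1`, and `u1, u2 ∈ [0,1]`, the perpetuity update is
dominated by the random-walk update:
`φ(x,u1,u2) ≤ y + 𝟙(u1 > 2/3) − 𝟙(u1 ≤ 2/3 ∧ y ≥ x₀)`. -/
theorem update_dominated
    (β : ℝ) (hβ : 1 ≤ β)
    (x₀ : ℝ) (hx₀ : x₀ = (1 + (2/3 : ℝ) ^ (1/β)) / (1 - (2/3 : ℝ) ^ (1/β)))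
    (x y u1 u2 : ℝ) (hx : 0 ≤ x) (hxy : x ≤ y) (hy : x₀ - 1 ≤ y)
    (hu1 : u1 ∈ Set.Icc (0:ℝ) 1) (hu2 : u2 ∈ Set.Icc (0:ℝ) 1) :
    (if u1 < 1 / (1 + x) ^ β then (1:ℝ) else 0) * u2 ^ (1/β)
      + (if 1 / (1 + x) ^ β ≤ u1 then (1:ℝ) else 0) * u1 ^ (1/β) * (1 + x)
    ≤ y + (if 2/3 < u1 then (1:ℝ) else 0)
        - (if u1 ≤ 2/3 ∧ x₀ ≤ y then (1:ℝ) else 0) := by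
  obtain ⟨hu1l, hu1r⟩ := hu1
  obtain ⟨hu2l, hu2r⟩ := hu2
  set c := (2/3 : ℝ) ^ (1/β) with hc
  have hβ0 : (0:ℝ) < β := by linarith
  have hb0 : (0:ℝ) < 1/β := by positivity
  have hb1 : 1/β ≤ 1 := by rw [div_le_one hβ0]; linarith
  have hc0 : 0 < c := Real.rpow_pos_of_pos (by norm_num) _
  have hc1 : c < 1 := Real.rpow_lt_one (by norm_num) (by norm_num) hb0
  have hc23 : 2/3 ≤ c := by
    calc (2/3:ℝ) = (2/3:ℝ) ^ (1:ℝ) := (Real.rpow_one _).symm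
    _ ≤ c := Real.rpow_le_rpow_of_exponent_ge (by norm_num) (by norm_num) hb1
  have hx₀2 : 2 ≤ x₀ := by
    rw [hx₀, le_div_iff₀ (by linarith)]; linarith
  have hy0 : (0:ℝ) ≤ y := le_trans hx hxy
  have hu2p : u2 ^ (1/β) ≤ 1 := Real.rpow_le_one hu2l hu2r hb0.le
  have hx₀y : x₀ * (1 - c) = 1 + c := by
    rw [hx₀, div_mul_cancel₀ _ (by linarith : (1:ℝ) - c ≠ 0)]
  by_cases h1 : u1 < 1 / (1 + x) ^ β
  · rw [if_pos h1, if_neg (not_le.mpr h1)]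
    by_cases h2 : 2/3 < u1
    · rw [if_pos h2, if_neg (fun h => absurd h.1 (not_le.mpr h2))]
      linarith
    · rw [if_neg h2]
      by_cases h3 : x₀ ≤ y
      · rw [if_pos ⟨not_lt.mp h2, h3⟩]; linarith
      · rw [if_neg (fun h => h3 h.2)]; linarith
  · rw [if_neg h1, if_pos (not_lt.mp h1)]
    have hu1p1 : u1 ^ (1/β) ≤ 1 := Real.rpow_le_one hu1l hu1r hb0.le
    have hu1p0 : 0 ≤ u1 ^ (1/β) := Real.rpow_nonneg hu1l _
    by_cases h2 : 2/3 < u1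
    · rw [if_pos h2, if_neg (fun h => absurd h.1 (not_le.mpr h2))]
      nlinarith [mul_le_mul_of_nonneg_right hu1p1 (by linarith : (0:ℝ) ≤ 1 + x)]
    · rw [if_neg h2]
      have hle : u1 ^ (1/β) ≤ c := Real.rpow_le_rpow hu1l (not_lt.mp h2) hb0.le
      have key : u1 ^ (1/β) * (1 + x) ≤ c * (1 + y) := by
        have := mul_le_mul hle (by linarith : (1:ℝ) + x ≤ 1 + y) (by linarith) hc0.le
        linarith
      by_cases h3 : x₀ ≤ y
      · rw [if_pos ⟨not_lt.mp h2, h3⟩]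
        -- need c*(1+y) ≤ y - 1, i.e. y*(1-c) ≥ 1+c, from y ≥ x₀
        nlinarith [mul_le_mul_of_nonneg_right h3 (by linarith : (0:ℝ) ≤ 1 - c)]
      · rw [if_neg (fun h => h3 h.2)]
        -- need c*(1+y) ≤ y, i.e. y*(1-c) ≥ c, from y ≥ x₀ - 1
        nlinarith [mul_le_mul_of_nonneg_right hy (by linarith : (0:ℝ) ≤ 1 - c)]
end

section
/- Let β ≥ 1 and x₀ = (1 + (2/3)^{1/β})/(1 − (2/3)^{1/β}). Then x₀ + 1 ≤ 6β; equivalently, ln(x₀ + 1) ≤ ln(6β). -/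
/-- For `β ≥ 1` and `x₀ = (1+(2/3)^(1/β))/(1-(2/3)^(1/β))`, one has
`x₀ + 1 ≤ 6β`. -/
theorem x0_upper_bound
    (β : ℝ) (hβ : 1 ≤ β)
    (x₀ : ℝ) (hx₀ : x₀ = (1 + (2/3 : ℝ) ^ (1/β)) / (1 - (2/3 : ℝ) ^ (1/β))) :
    x₀ + 1 ≤ 6 * β := by
  have hβ0 : (0:ℝ) < β := lt_of_lt_of_le one_pos hβ
  set t : ℝ := (2/3 : ℝ) ^ (1/β) with ht
  -- Bernoulli: (1 - 1/(3β))^β ≥ 1 - β/(3β) = 2/3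
  have hs : (-1:ℝ) ≤ -(1/(3*β)) := by
    have : 1/(3*β) ≤ 1 := by
      rw [div_le_one (by linarith)]
      linarith
    linarith
  have hbern : (2/3 : ℝ) ≤ (1 - 1/(3*β)) ^ β := by
    have := one_add_mul_self_le_rpow_one_add hs hβ
    have h1 : 1 + β * (-(1/(3*β))) = 2/3 := by
      field_simp
      ring
    rw [h1] at this
    have h2 : (1 + -(1/(3*β))) = 1 - 1/(3*β) := by ring
    rwa [h2] at this
  have hb0 : (0:ℝ) ≤ 1 - 1/(3*β) := by nlinarith
  have htle : t ≤ 1 - 1/(3*β) := by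
    have h := Real.rpow_le_rpow (by norm_num) hbern (le_of_lt (by positivity : (0:ℝ) < 1/β))
    rwa [← Real.rpow_mul hb0, mul_one_div, div_self (ne_of_gt hβ0),
      Real.rpow_one] at h
  have ht1 : 1/(3*β) ≤ 1 - t := by linarith
  have htpos : 0 < 1 - t := lt_of_lt_of_le (by positivity) ht1
  have hx1 : x₀ + 1 = 2 / (1 - t) := by
    rw [hx₀]
    field_simp
    ring
  rw [hx1, div_le_iff₀ htpos]
  have : 6 * β * (1/(3*β)) = 2 := by field_simp; ring
  nlinarith
end

section
/- Let β ∈ (0,∞) and 0 ≤ m ≤ M, and let U(1), U(2) be independent Unif([0,1]) random variables. Define r = 𝟙(U(1) ≤ ((1+m)/(1+M))^β), m' = (1+m)U(2)^{1/β}, and M' = r·(1+m)U(2)^{1/β} + (1−r)·(1+M)U(1)^{1/β}. Then E[M' − m'] = (β/(β+1))(M − m). -/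
open MeasureTheory ProbabilityTheory Set

/-!
Only the event `U(1) > c`, where `c = ((1+m)/(1+M))^β`, contributes to the gap, and there it equals
`(1+M) U(1)^{1/β} - (1+m) U(2)^{1/β}`. By independence its expectation is
`((1+M)(1 - c^{1/β+1}) - (1+m)(1 - c)) / (1/β + 1)`, and the threshold is chosen so that
`c^{1/β} = (1+m)/(1+M)`: the two terms in `c` cancel, leaving `(β/(β+1))(M - m)`.
-/

section UniformLaw

variable {Ω : Type*} [MeasureSpace Ω] {U : Ω → ℝ}

theorem integral_comp_eq_setIntegral_Icc (hU : Measurable U)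
    (law : Measure.map U ℙ = volume.restrict (Icc (0:ℝ) 1)) {f : ℝ → ℝ} (hf : Measurable f) :
    ∫ ω, f (U ω) = ∫ x in Icc (0:ℝ) 1, f x := by
  rw [← law, integral_map hU.aemeasurable hf.aestronglyMeasurable]

theorem integrable_comp_of_integrableOn_Icc (hU : Measurable U)
    (law : Measure.map U ℙ = volume.restrict (Icc (0:ℝ) 1)) {f : ℝ → ℝ} (hf : Measurable f)
    (hfi : IntegrableOn f (Icc 0 1)) :
    Integrable (fun ω => f (U ω)) :=
  (integrable_map_measure hf.aestronglyMeasurable hU.aemeasurable).1 (law ▸ hfi)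

end UniformLaw

theorem setIntegral_Icc_indicator_Ioi {c : ℝ} (hc0 : 0 ≤ c) (hc1 : c ≤ 1) (f : ℝ → ℝ) :
    ∫ x in Icc (0:ℝ) 1, (Ioi c).indicator f x = ∫ x in c..1, f x := by
  have hinter : Icc (0:ℝ) 1 ∩ Ioi c = Ioc c 1 := by
    ext x
    simp only [mem_inter_iff, mem_Icc, mem_Ioi, mem_Ioc]
    constructor
    · rintro ⟨⟨-, hx1⟩, hcx⟩
      exact ⟨hcx, hx1⟩
    · rintro ⟨hcx, hx1⟩
      exact ⟨⟨hc0.trans hcx.le, hx1⟩, hcx⟩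
  rw [setIntegral_indicator measurableSet_Ioi, hinter, intervalIntegral.integral_of_le hc1]

theorem integrableOn_Icc_rpow {p : ℝ} (hp : -1 < p) :
    IntegrableOn (fun x : ℝ => x ^ p) (Icc 0 1) :=
  (intervalIntegrable_iff_integrableOn_Icc_of_le zero_le_one).1
    (intervalIntegral.intervalIntegrable_rpow' hp)

theorem setIntegral_Icc_rpow {p : ℝ} (hp : -1 < p) :
    ∫ x in Icc (0:ℝ) 1, x ^ p = 1 / (p + 1) := by
  rw [integral_Icc_eq_integral_Ioc, ← intervalIntegral.integral_of_le zero_le_one,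
    integral_rpow (Or.inl hp), Real.one_rpow, Real.zero_rpow (by linarith), sub_zero]

theorem integral_indicator_Ioi_mul_sub_rpow {Ω : Type*} [MeasureSpace Ω] {U1 U2 : Ω → ℝ}
    (hU1 : Measurable U1) (hU2 : Measurable U2)
    (law1 : Measure.map U1 ℙ = volume.restrict (Icc (0:ℝ) 1))
    (law2 : Measure.map U2 ℙ = volume.restrict (Icc (0:ℝ) 1))
    (hind : IndepFun U1 U2 ℙ) {c p : ℝ} (hc0 : 0 ≤ c) (hc1 : c ≤ 1) (hp : -1 < p) (A B : ℝ) :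
    ∫ ω, (Ioi c).indicator 1 (U1 ω) * (B * U1 ω ^ p - A * U2 ω ^ p)
      = (B * (1 - c ^ (p + 1)) - A * (1 - c)) / (p + 1) := by
  have hrpow : Measurable fun x : ℝ => x ^ p := measurable_id.pow_const p
  have hindicator : Measurable ((Ioi c).indicator (1 : ℝ → ℝ)) :=
    measurable_const.indicator measurableSet_Ioi
  have hrpow_ind : Measurable ((Ioi c).indicator fun x : ℝ => x ^ p) :=
    hrpow.indicator measurableSet_Ioi
  have hsplit : ∀ ω, (Ioi c).indicator 1 (U1 ω) * (B * U1 ω ^ p - A * U2 ω ^ p)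
      = B * (Ioi c).indicator (fun x => x ^ p) (U1 ω)
        - A * ((Ioi c).indicator 1 (U1 ω) * U2 ω ^ p) := by
    intro ω
    by_cases h : U1 ω ∈ Ioi c <;> simp [h]
  have hint1 : Integrable fun ω => (Ioi c).indicator (fun x : ℝ => x ^ p) (U1 ω) :=
    integrable_comp_of_integrableOn_Icc hU1 law1 hrpow_ind
      ((integrableOn_Icc_rpow hp).indicator measurableSet_Ioi)
  have hint2 : Integrable fun ω => (Ioi c).indicator (1 : ℝ → ℝ) (U1 ω) * U2 ω ^ p :=
    (hind.comp hindicator hrpow).integrable_mul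
      (integrable_comp_of_integrableOn_Icc hU1 law1 hindicator
        ((integrableOn_const (by simp)).indicator measurableSet_Ioi))
      (integrable_comp_of_integrableOn_Icc hU2 law2 hrpow (integrableOn_Icc_rpow hp))
  have hprod : ∫ ω, (Ioi c).indicator (1 : ℝ → ℝ) (U1 ω) * U2 ω ^ p
      = (1 - c) * (1 / (p + 1)) := by
    have hfactor := (hind.comp hindicator hrpow).integral_fun_mul_eq_mul_integral
      (hindicator.comp hU1).aestronglyMeasurable (hrpow.comp hU2).aestronglyMeasurable
    simp only [Function.comp_apply] at hfactor
    rw [hfactor, integral_comp_eq_setIntegral_Icc hU1 law1 hindicator,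
      setIntegral_Icc_indicator_Ioi hc0 hc1, integral_comp_eq_setIntegral_Icc hU2 law2 hrpow,
      setIntegral_Icc_rpow hp]
    simp
  have hp1 : p + 1 ≠ 0 := by linarith
  rw [integral_congr_ae (Filter.Eventually.of_forall hsplit),
    integral_sub (hint1.const_mul B) (hint2.const_mul A), integral_const_mul, integral_const_mul,
    hprod, integral_comp_eq_setIntegral_Icc hU1 law1 hrpow_ind,
    setIntegral_Icc_indicator_Ioi hc0 hc1, integral_rpow (Or.inl hp), Real.one_rpow]
  field_simp

theorem expected_gap_contraction_general
    {Ω : Type*} [MeasureSpace Ω]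
    (β : ℝ) (hβ : 0 < β) (m M : ℝ) (hm : 0 ≤ m) (hmM : m ≤ M)
    (U1 U2 : Ω → ℝ) (hU1 : Measurable U1) (hU2 : Measurable U2)
    (law1 : Measure.map U1 ℙ = volume.restrict (Set.Icc (0:ℝ) 1))
    (law2 : Measure.map U2 ℙ = volume.restrict (Set.Icc (0:ℝ) 1))
    (hind : IndepFun U1 U2 ℙ) :
    ∫ ω, (((if U1 ω ≤ ((1 + m) / (1 + M)) ^ β then (1:ℝ) else 0)
            * (1 + m) * (U2 ω) ^ (1/β)
          + (1 - if U1 ω ≤ ((1 + m) / (1 + M)) ^ β then (1:ℝ) else 0)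
            * (1 + M) * (U1 ω) ^ (1/β))
        - (1 + m) * (U2 ω) ^ (1/β))
      = (β / (β + 1)) * (M - m) := by
  have hA : 0 < 1 + m := by linarith
  have hB : 0 < 1 + M := by linarith
  have hAB : 0 < (1 + m) / (1 + M) := div_pos hA hB
  set c := ((1 + m) / (1 + M)) ^ β with hc
  have hc0 : 0 ≤ c := (Real.rpow_pos_of_pos hAB β).le
  have hc1 : c ≤ 1 := Real.rpow_le_one hAB.le ((div_le_one hB).2 (by linarith)) hβ.le
  have hc_root : c ^ (1 / β) = (1 + m) / (1 + M) := by
    rw [hc, one_div, Real.rpow_rpow_inv hAB.le hβ.ne']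
  have hgap : ∀ ω, (((if U1 ω ≤ c then (1:ℝ) else 0) * (1 + m) * (U2 ω) ^ (1/β)
        + (1 - if U1 ω ≤ c then (1:ℝ) else 0) * (1 + M) * (U1 ω) ^ (1/β))
        - (1 + m) * (U2 ω) ^ (1/β))
      = (Ioi c).indicator 1 (U1 ω) * ((1 + M) * U1 ω ^ (1/β) - (1 + m) * U2 ω ^ (1/β)) := by
    intro ω
    by_cases h : U1 ω ≤ c <;> simp [h, indicator_apply]
  simp_rw [hgap]
  rw [integral_indicator_Ioi_mul_sub_rpow hU1 hU2 law1 law2 hind hc0 hc1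
    (by linarith [one_div_pos.2 hβ]), Real.rpow_add_one (by positivity), hc_root]
  field_simp
  ring

/-- For `β > 0`, `0 ≤ m ≤ M` and independent `U(1), U(2) ~ Unif([0,1])`, with
`r = 𝟙(U(1) ≤ ((1+m)/(1+M))^β)`, `m' = (1+m)·U(2)^(1/β)` and
`M' = r·(1+m)·U(2)^(1/β) + (1−r)·(1+M)·U(1)^(1/β)`, one has
`E[M' − m'] = (β/(β+1))·(M − m)`. -/
theorem expected_gap_contraction
    {Ω : Type*} [MeasureSpace Ω] [IsProbabilityMeasure (ℙ : Measure Ω)]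
    (β : ℝ) (hβ : 0 < β) (m M : ℝ) (hm : 0 ≤ m) (hmM : m ≤ M)
    (U1 U2 : Ω → ℝ) (hU1 : Measurable U1) (hU2 : Measurable U2)
    (law1 : Measure.map U1 ℙ = volume.restrict (Set.Icc (0:ℝ) 1))
    (law2 : Measure.map U2 ℙ = volume.restrict (Set.Icc (0:ℝ) 1))
    (hind : IndepFun U1 U2 ℙ) :
    ∫ ω, (((if U1 ω ≤ ((1 + m) / (1 + M)) ^ β then (1:ℝ) else 0)
            * (1 + m) * (U2 ω) ^ (1/β)
          + (1 - if U1 ω ≤ ((1 + m) / (1 + M)) ^ β then (1:ℝ) else 0)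
            * (1 + M) * (U1 ω) ^ (1/β))
        - (1 + m) * (U2 ω) ^ (1/β))
      = (β / (β + 1)) * (M - m) :=
  expected_gap_contraction_general β hβ m M hm hmM U1 U2 hU1 hU2 law1 law2 hind
end

section
/- Let β ∈ (0,∞) and 0 ≤ m ≤ M, and let U(1), U(2) be independent Unif([0,1]) random variables. Define r = 𝟙(U(1) ≤ ((1+m)/(1+M))^β), m' = (1+m)U(2)^{1/β}, and M' = r·(1+m)U(2)^{1/β} + (1−r)·(1+M)U(1)^{1/β}. Then P(M' = m') ≥ ((1+m)/(1+M))^β; that is, the upper and lower processes coalesce in one step with probability at least ((1+m)/(1+M))^β. -/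
open MeasureTheory ProbabilityTheory

/-- For `β > 0`, `0 ≤ m ≤ M` and independent `U(1), U(2) ~ Unif([0,1])`, with
`r = 𝟙(U(1) ≤ ((1+m)/(1+M))^β)`, `m' = (1+m)·U(2)^(1/β)` and
`M' = r·(1+m)·U(2)^(1/β) + (1−r)·(1+M)·U(1)^(1/β)`, the processes coalesce in
one step with probability at least `((1+m)/(1+M))^β`:
`P(M' = m') ≥ ((1+m)/(1+M))^β`. -/
theorem coalescence_probability
    {Ω : Type*} [MeasureSpace Ω] [IsProbabilityMeasure (ℙ : Measure Ω)]
    (β : ℝ) (hβ : 0 < β) (m M : ℝ) (hm : 0 ≤ m) (hmM : m ≤ M)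
    (U1 U2 : Ω → ℝ) (hU1 : Measurable U1) (hU2 : Measurable U2)
    (law1 : Measure.map U1 ℙ = volume.restrict (Set.Icc (0:ℝ) 1))
    (law2 : Measure.map U2 ℙ = volume.restrict (Set.Icc (0:ℝ) 1))
    (hind : IndepFun U1 U2 ℙ) :
    ENNReal.ofReal (((1 + m) / (1 + M)) ^ β)
      ≤ (ℙ : Measure Ω) {ω |
          (if U1 ω ≤ ((1 + m) / (1 + M)) ^ β then (1:ℝ) else 0)
              * (1 + m) * (U2 ω) ^ (1/β)
            + (1 - if U1 ω ≤ ((1 + m) / (1 + M)) ^ β then (1:ℝ) else 0)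
              * (1 + M) * (U1 ω) ^ (1/β)
          = (1 + m) * (U2 ω) ^ (1/β)} := by
  set c : ℝ := ((1 + m) / (1 + M)) ^ β with hc
  have hM0 : (0:ℝ) < 1 + M := by linarith
  have hratio0 : 0 ≤ (1 + m) / (1 + M) := by positivity
  have hratio1 : (1 + m) / (1 + M) ≤ 1 := by
    rw [div_le_one hM0]; linarith
  have hc0 : 0 ≤ c := Real.rpow_nonneg hratio0 β
  have hc1 : c ≤ 1 := Real.rpow_le_one hratio0 hratio1 hβ.le
  have hsub : {ω | U1 ω ≤ c} ⊆ {ω |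
          (if U1 ω ≤ c then (1:ℝ) else 0) * (1 + m) * (U2 ω) ^ (1/β)
            + (1 - if U1 ω ≤ c then (1:ℝ) else 0) * (1 + M) * (U1 ω) ^ (1/β)
          = (1 + m) * (U2 ω) ^ (1/β)} := by
    intro ω hω
    simp only [Set.mem_setOf_eq] at hω ⊢
    rw [if_pos hω]; ring
  have hmeas : ℙ {ω | U1 ω ≤ c} = ENNReal.ofReal c := by
    have : ℙ {ω | U1 ω ≤ c} = (Measure.map U1 ℙ) (Set.Iic c) := by
      rw [Measure.map_apply hU1 measurableSet_Iic]; rfl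
    rw [this, law1, Measure.restrict_apply measurableSet_Iic]
    have : Set.Iic c ∩ Set.Icc (0:ℝ) 1 = Set.Icc 0 c := by
      ext x; simp only [Set.mem_inter_iff, Set.mem_Iic, Set.mem_Icc]
      constructor
      · rintro ⟨h1, h2, _⟩; exact ⟨h2, h1⟩
      · rintro ⟨h1, h2⟩; exact ⟨h2, h1, h2.trans hc1⟩
    rw [this, Real.volume_Icc, sub_zero]
  calc ENNReal.ofReal c = ℙ {ω | U1 ω ≤ c} := hmeas.symm
    _ ≤ _ := measure_mono hsub
end

section
/- Let β ∈ (0,∞) and x₀ = (1 + (2/3)^{1/β})/(1 − (2/3)^{1/β}). Let G be a geometric random variable with P(G = i) = (1/2)^{i+1} for i ∈ {0,1,2,…}, let D = x₀ − 1 + G, and let A ∼ Unif([0,1]) be independent of G. Then D + 𝟙(A > 2/3) − 𝟙(A ≤ 2/3 and D ≥ x₀) has the same distribution as D; that is, x₀ − 1 + Geo(1/2) is a stationary distribution for the dominating chain. -/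
open MeasureTheory ProbabilityTheory

/-- For `β > 0` and `x₀ = (1+(2/3)^(1/β))/(1-(2/3)^(1/β))`, let `G` be
geometric with `P(G = i) = (1/2)^(i+1)`, `D = x₀ − 1 + G`, and
`A ~ Unif([0,1])` independent of `G`.  Then
`D + 𝟙(A > 2/3) − 𝟙(A ≤ 2/3 ∧ D ≥ x₀)` has the same distribution as `D`:
`x₀ − 1 + Geo(1/2)` is stationary for the dominating chain. -/
theorem dominating_chain_stationary
    {Ω : Type*} [MeasureSpace Ω] [IsProbabilityMeasure (ℙ : Measure Ω)]
    (β : ℝ) (hβ : 0 < β)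
    (x₀ : ℝ) (hx₀ : x₀ = (1 + (2/3 : ℝ) ^ (1/β)) / (1 - (2/3 : ℝ) ^ (1/β)))
    (G : Ω → ℕ) (hG : Measurable G)
    (hGlaw : ∀ i : ℕ, (ℙ : Measure Ω) {ω | G ω = i}
      = ENNReal.ofReal ((1/2 : ℝ) ^ (i + 1)))
    (A : Ω → ℝ) (hA : Measurable A)
    (hAlaw : Measure.map A ℙ = volume.restrict (Set.Icc (0:ℝ) 1))
    (hind : IndepFun G A ℙ)
    (D : Ω → ℝ) (hD : D = fun ω => x₀ - 1 + (G ω : ℝ)) :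
    Measure.map (fun ω =>
        D ω + (if 2/3 < A ω then (1:ℝ) else 0)
          - (if A ω ≤ 2/3 ∧ x₀ ≤ D ω then (1:ℝ) else 0)) ℙ
      = Measure.map D ℙ := by
  -- the updated chain, expressed as a natural-number valued variable
  set N : Ω → ℕ := fun ω =>
    if 2/3 < A ω then G ω + 1 else (if 1 ≤ G ω then G ω - 1 else G ω) with hN
  have hNmeas : Measurable N := by
    apply Measurable.ite (measurableSet_lt measurable_const hA)
    · exact hG.add measurable_const
    · exact Measurable.ite (measurableSet_le measurable_const hG)
        (hG.sub measurable_const) hG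
  -- rewrite the map function as emb ∘ N
  have hfun : (fun ω =>
        D ω + (if 2/3 < A ω then (1:ℝ) else 0)
          - (if A ω ≤ 2/3 ∧ x₀ ≤ D ω then (1:ℝ) else 0))
      = (fun n : ℕ => x₀ - 1 + (n : ℝ)) ∘ N := by
    funext ω
    simp only [hD, hN, Function.comp]
    by_cases h1 : 2/3 < A ω
    · have h2 : ¬ (A ω ≤ 2/3) := not_le.mpr h1
      simp [h1, h2]
      push_cast; ring
    · have h2 : A ω ≤ 2/3 := not_lt.mp h1
      by_cases h3 : 1 ≤ G ω
      · have h4 : x₀ ≤ x₀ - 1 + (G ω : ℝ) := by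
          have : (1:ℝ) ≤ (G ω : ℝ) := by exact_mod_cast h3
          linarith
        simp only [h1, if_false, h2, h4, and_self, if_true, h3]
        rw [Nat.cast_sub h3]
        push_cast; ring
      · have h4 : G ω = 0 := by omega
        have h5 : ¬ x₀ ≤ x₀ - 1 + (G ω : ℝ) := by
          rw [h4]; push_cast; linarith
        simp [h1, h3, h5]
  have hDfun : D = (fun n : ℕ => x₀ - 1 + (n : ℝ)) ∘ G := by
    funext ω; simp [hD]
  have hemb : Measurable (fun n : ℕ => x₀ - 1 + (n : ℝ)) := measurable_from_nat
  rw [hfun, hDfun, ← Measure.map_map hemb hNmeas, ← Measure.map_map hemb hG]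
  congr 1
  -- it suffices to show N and G have the same law on ℕ
  apply MeasureTheory.Measure.ext_of_singleton
  intro i
  rw [Measure.map_apply hNmeas (measurableSet_singleton i),
    Measure.map_apply hG (measurableSet_singleton i)]
  -- probabilities for A
  have hPA : ∀ s : Set ℝ, MeasurableSet s → ℙ (A ⁻¹' s)
      = volume (s ∩ Set.Icc (0:ℝ) 1) := by
    intro s hs
    rw [← Measure.map_apply hA hs, hAlaw, Measure.restrict_apply hs]
  have hAle : ℙ (A ⁻¹' Set.Iic (2/3)) = ENNReal.ofReal (2/3) := by
    rw [hPA _ measurableSet_Iic]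
    have : Set.Iic (2/3:ℝ) ∩ Set.Icc 0 1 = Set.Icc 0 (2/3) := by
      ext x
      simp only [Set.mem_inter_iff, Set.mem_Iic, Set.mem_Icc]
      constructor
      · rintro ⟨h1, h2, h3⟩; exact ⟨h2, h1⟩
      · rintro ⟨h1, h2⟩; exact ⟨h2, h1, by linarith⟩
    rw [this, Real.volume_Icc]; norm_num
  have hAgt : ℙ (A ⁻¹' Set.Ioi (2/3)) = ENNReal.ofReal (1/3) := by
    rw [hPA _ measurableSet_Ioi]
    have : Set.Ioi (2/3:ℝ) ∩ Set.Icc 0 1 = Set.Ioc (2/3) 1 := by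
      ext x
      simp only [Set.mem_inter_iff, Set.mem_Ioi, Set.mem_Icc, Set.mem_Ioc]
      constructor
      · rintro ⟨h1, h2, h3⟩; exact ⟨h1, h3⟩
      · rintro ⟨h1, h2⟩; exact ⟨h1, by linarith, h2⟩
    rw [this, Real.volume_Ioc]; norm_num
  have hPG : ∀ j : ℕ, ℙ (G ⁻¹' {j}) = ENNReal.ofReal ((1/2:ℝ) ^ (j+1)) := by
    intro j; exact hGlaw j
  -- the independence splitting
  have hsplit : ∀ (s : Set ℕ) (t : Set ℝ), MeasurableSet s → MeasurableSet t →
      ℙ (G ⁻¹' s ∩ A ⁻¹' t) = ℙ (G ⁻¹' s) * ℙ (A ⁻¹' t) := by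
    intro s t hs ht
    exact hind.measure_inter_preimage_eq_mul s t hs ht
  rcases Nat.eq_zero_or_pos i with hi | hi
  · -- i = 0
    subst hi
    have hset : N ⁻¹' {0} = G ⁻¹' {0, 1} ∩ A ⁻¹' Set.Iic (2/3) := by
      ext ω
      simp only [hN, Set.mem_preimage, Set.mem_singleton_iff, Set.mem_inter_iff,
        Set.mem_insert_iff, Set.mem_Iic]
      by_cases h1 : 2/3 < A ω
      · simp [h1, not_le.mpr h1]
      · have h2 : A ω ≤ 2/3 := not_lt.mp h1
        simp only [h1, if_false, h2, and_true]
        by_cases h3 : 1 ≤ G ω <;> simp [h3] <;> omega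
    rw [hset, hsplit _ _ (by measurability) measurableSet_Iic, hAle]
    have : (G ⁻¹' {0, 1} : Set Ω) = G ⁻¹' {0} ∪ G ⁻¹' {1} := by
      ext ω; simp [Set.mem_preimage]
    rw [this, measure_union ?_ (hG (measurableSet_singleton 1)), hPG, hPG]
    · rw [← ENNReal.ofReal_add (by positivity) (by positivity),
        ← ENNReal.ofReal_mul (by positivity)]
      norm_num
    · apply Set.disjoint_left.mpr
      intro ω h0 h1
      simp only [Set.mem_preimage, Set.mem_singleton_iff] at h0 h1
      omega
  · -- i ≥ 1
    obtain ⟨j, rfl⟩ : ∃ j, i = j + 1 := ⟨i - 1, by omega⟩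
    have hset : N ⁻¹' {j + 1}
        = (G ⁻¹' {j} ∩ A ⁻¹' Set.Ioi (2/3)) ∪ (G ⁻¹' {j+2} ∩ A ⁻¹' Set.Iic (2/3)) := by
      ext ω
      simp only [hN, Set.mem_preimage, Set.mem_singleton_iff, Set.mem_union,
        Set.mem_inter_iff, Set.mem_Ioi, Set.mem_Iic]
      by_cases h1 : 2/3 < A ω
      · simp only [h1, if_true, and_true, not_le.mpr h1, and_false, or_false]
        omega
      · have h2 : A ω ≤ 2/3 := not_lt.mp h1
        simp only [h1, if_false, h2, and_true, false_and, false_or]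
        by_cases h3 : 1 ≤ G ω <;> simp [h3] <;> omega
    rw [hset, measure_union ?_ ((hG (measurableSet_singleton (j+2))).inter (hA measurableSet_Iic)),
      hsplit _ _ (measurableSet_singleton j) measurableSet_Ioi,
      hsplit _ _ (measurableSet_singleton (j+2)) measurableSet_Iic,
      hAgt, hAle, hPG j, hPG (j+2), hPG (j+1)]
    · rw [← ENNReal.ofReal_mul (by positivity), ← ENNReal.ofReal_mul (by positivity),
        ← ENNReal.ofReal_add (by positivity) (by positivity)]
      congr 1
      ring
    · apply Set.disjoint_left.mpr
      rintro ω ⟨-, h1⟩ ⟨-, h2⟩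
      simp only [Set.mem_preimage, Set.mem_Ioi] at h1
      simp only [Set.mem_preimage, Set.mem_Iic] at h2
      linarith
end
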